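/- (Second Geometric Lemma, Lemma 3.2) There exist a finite set Λ_v contained in S² ∩ ℚ³ (unit vectors in ℝ³ with rational coordinates), for each ξ ∈ Λ_v vectors ξ₁, ξ₂ ∈ ℝ³ such that (ξ, ξ₁, ξ₂) is an orthonormal basis of ℝ³, a constant ε_v > 0, and for each ξ ∈ Λ_v a function γ_ξ that is smooth and strictly positive on the set of 3×3 symmetric real matrices A with |A − Id| < ε_v, such that every 3×3 symmetric real matrix A with |A − Id| < ε_v satisfies A = Σ_{ξ ∈ Λ_v} (γ_ξ(A))² (ξ ⊗ ξ). -/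

import Mathlib

/-
The nine unit vectors along the axes and (3, ±4, 0)/5, (3, 0, ±4)/5, (0, 3, ±4)/5 are rational
because 3² + 4² = 5², and their projections ξ ⊗ ξ span the symmetric matrices: a pair
(3, ±4, 0)/5 produces any prescribed (1,2) entry, and the axes then correct the diagonal. This
gives coefficients c_ξ(A), affine in A, with A = ∑ c_ξ(A) ξ ⊗ ξ for symmetric A and c_ξ(Id) > 0.
By continuity all c_ξ stay positive on a ball around Id, where γ_ξ = √c_ξ is smooth and positive.
-/

open scoped Matrix

attribute [local instance] Matrix.frobeniusNormedAddCommGroup Matrix.frobeniusNormedSpace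

def outer (u w : Fin 3 → ℝ) : Matrix (Fin 3) (Fin 3) ℝ := fun i j => u i * w j

def IsRationalVec (u : Fin 3 → ℝ) : Prop := ∀ i, ∃ q : ℚ, u i = (q : ℝ)

def dot3 (u v : Fin 3 → ℝ) : ℝ := ∑ i, u i * v i

def OrthonormalTriple (u v w : Fin 3 → ℝ) : Prop :=
  dot3 u u = 1 ∧ dot3 v v = 1 ∧ dot3 w w = 1 ∧
  dot3 u v = 0 ∧ dot3 u w = 0 ∧ dot3 v w = 0

namespace SecondGeometricLemma

open Matrix Function

lemma isRationalVec_intCast_div (z : Fin 3 → ℤ) (m : ℤ) :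
    IsRationalVec fun j => (z j : ℝ) / m :=
  fun j => ⟨z j / m, by push_cast; rfl⟩

lemma orthonormalTriple_cross {u v : Fin 3 → ℝ} (hu : dot3 u u = 1) (hv : dot3 v v = 1)
    (huv : dot3 u v = 0) : OrthonormalTriple u v (u ⨯₃ v) := by
  have hdot (a b : Fin 3 → ℝ) : dot3 a b = a ⬝ᵥ b := rfl
  simp only [OrthonormalTriple, hdot] at hu hv huv ⊢
  refine ⟨hu, hv, ?_, huv, dot_self_cross u v, dot_cross_self u v⟩
  rw [cross_dot_cross, hu, hv, dotProduct_comm v u, huv]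
  ring

lemma exists_forall_norm_sub_lt_pos {E ι : Type*} [NormedAddCommGroup E] [Finite ι]
    {f : ι → E → ℝ} (hf : ∀ i, Continuous (f i)) {x : E} (hx : ∀ i, 0 < f i x) :
    ∃ ε > 0, ∀ y, ‖y - x‖ < ε → ∀ i, 0 < f i y := by
  have hopen : IsOpen {y | ∀ i, 0 < f i y} := by
    simpa only [Set.ofPred_forall] using
      isOpen_iInter_of_finite fun i => isOpen_lt continuous_const (hf i)
  obtain ⟨ε, hε, hball⟩ := Metric.isOpen_iff.mp hopen x hx
  exact ⟨ε, hε, fun y hy => hball (mem_ball_iff_norm.mpr hy)⟩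

lemma contDiff_entry {m n : Type*} [Fintype m] [Fintype n] {N : WithTop ℕ∞} (i : m) (j : n) :
    ContDiff ℝ N fun A : Matrix m n ℝ => A i j :=
  (LinearMap.toContinuousLinearMap (entryLinearMap ℝ ℝ i j)).contDiff

def scaledDir : Fin 9 → Fin 3 → ℤ
  | 0 => ![5, 0, 0] | 1 => ![0, 5, 0] | 2 => ![0, 0, 5]
  | 3 => ![3, 4, 0] | 4 => ![3, -4, 0]
  | 5 => ![3, 0, 4] | 6 => ![3, 0, -4]
  | 7 => ![0, 3, 4] | 8 => ![0, 3, -4]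

def scaledPerp : Fin 9 → Fin 3 → ℤ
  | 0 => ![0, 5, 0] | 1 => ![0, 0, 5] | 2 => ![5, 0, 0]
  | 3 => ![-4, 3, 0] | 4 => ![4, 3, 0]
  | 5 => ![-4, 0, 3] | 6 => ![4, 0, 3]
  | 7 => ![0, -4, 3] | 8 => ![0, 4, 3]

noncomputable def dir (k : Fin 9) : Fin 3 → ℝ := fun j => (scaledDir k j : ℝ) / 5

noncomputable def perp (k : Fin 9) : Fin 3 → ℝ := fun j => (scaledPerp k j : ℝ) / 5

lemma dir_injective : Injective dir := by
  have hscaled : Injective scaledDir := by decide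
  intro k l h
  refine hscaled (funext fun j => ?_)
  exact_mod_cast (div_left_inj' (by norm_num : (5 : ℝ) ≠ 0)).mp (congrFun h j)

lemma dir_perp_orthonormal (k : Fin 9) :
    dot3 (dir k) (dir k) = 1 ∧ dot3 (perp k) (perp k) = 1 ∧ dot3 (dir k) (perp k) = 0 := by
  fin_cases k <;> simp [dot3, dir, perp, scaledDir, scaledPerp, Fin.sum_univ_three] <;> norm_num

-- A pair (3, ±4, 0)/5 with c₊ + c₋ = 1/4 contributes (c₊ - c₋)·12/25 to the (1,2) entry and
-- 9/100, 16/100 to the diagonal; the axis coefficients subtract these diagonal contributions.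
noncomputable def coeff : Fin 9 → Matrix (Fin 3) (Fin 3) ℝ → ℝ
  | 0 => fun A => A 0 0 - 9 / 50
  | 1 => fun A => A 1 1 - 1 / 4
  | 2 => fun A => A 2 2 - 8 / 25
  | 3 => fun A => 1 / 8 + 25 / 24 * A 0 1
  | 4 => fun A => 1 / 8 - 25 / 24 * A 0 1
  | 5 => fun A => 1 / 8 + 25 / 24 * A 0 2
  | 6 => fun A => 1 / 8 - 25 / 24 * A 0 2
  | 7 => fun A => 1 / 8 + 25 / 24 * A 1 2
  | 8 => fun A => 1 / 8 - 25 / 24 * A 1 2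

lemma contDiff_coeff (k : Fin 9) : ContDiff ℝ (⊤ : ℕ∞) (coeff k) := by
  fin_cases k <;> simp only [coeff]
  all_goals first
    | exact (contDiff_entry _ _).sub contDiff_const
    | exact contDiff_const.add (contDiff_const.mul (contDiff_entry _ _))
    | exact contDiff_const.sub (contDiff_const.mul (contDiff_entry _ _))

lemma coeff_one_pos (k : Fin 9) : 0 < coeff k 1 := by
  fin_cases k <;> simp [coeff] <;> norm_num

lemma sum_coeff_smul_outer {A : Matrix (Fin 3) (Fin 3) ℝ} (hA : Aᵀ = A) :
    ∑ k, coeff k A • outer (dir k) (dir k) = A := by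
  have h10 : A 1 0 = A 0 1 := congrFun (congrFun hA 0) 1
  have h20 : A 2 0 = A 0 2 := congrFun (congrFun hA 0) 2
  have h21 : A 2 1 = A 1 2 := congrFun (congrFun hA 1) 2
  ext i j
  simp only [Matrix.sum_apply, Matrix.smul_apply, outer, smul_eq_mul, Fin.sum_univ_succ,
    Fin.sum_univ_zero]
  fin_cases i <;> fin_cases j <;> simp [coeff, dir, scaledDir, h10, h20, h21] <;> ring

end SecondGeometricLemma

open SecondGeometricLemma Function

theorem second_geometric_lemma :
    ∃ (Λv : Finset (Fin 3 → ℝ)) (e₁ e₂ : (Fin 3 → ℝ) → (Fin 3 → ℝ)) (εv : ℝ)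
      (γ : (Fin 3 → ℝ) → Matrix (Fin 3) (Fin 3) ℝ → ℝ),
      0 < εv ∧
      (∀ ξ ∈ Λv, IsRationalVec ξ ∧ OrthonormalTriple ξ (e₁ ξ) (e₂ ξ)) ∧
      (∀ ξ ∈ Λv,
        ContDiffOn ℝ (⊤ : ℕ∞) (γ ξ)
          {A : Matrix (Fin 3) (Fin 3) ℝ | Aᵀ = A ∧ ‖A - 1‖ < εv} ∧
        ∀ A : Matrix (Fin 3) (Fin 3) ℝ, Aᵀ = A → ‖A - 1‖ < εv → 0 < γ ξ A) ∧
      ∀ A : Matrix (Fin 3) (Fin 3) ℝ, Aᵀ = A → ‖A - 1‖ < εv →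
        A = ∑ ξ ∈ Λv, (γ ξ A) ^ 2 • outer ξ ξ := by
  classical
  obtain ⟨ε, hε, hpos⟩ :=
    exists_forall_norm_sub_lt_pos (fun k => (contDiff_coeff k).continuous) coeff_one_pos
  have hinv : ∀ k, invFun dir (dir k) = k := leftInverse_invFun dir_injective
  refine ⟨Finset.univ.image dir, fun ξ => perp (invFun dir ξ),
    fun ξ => ξ ⨯₃ perp (invFun dir ξ), ε, fun ξ A => √(coeff (invFun dir ξ) A), hε, ?_, ?_, ?_⟩
  · simp only [Finset.forall_mem_image, hinv]
    intro k _
    obtain ⟨hdir, hperp, horth⟩ := dir_perp_orthonormal k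
    exact ⟨isRationalVec_intCast_div _ _, orthonormalTriple_cross hdir hperp horth⟩
  · simp only [Finset.forall_mem_image, hinv]
    intro k _
    exact ⟨(contDiff_coeff k).contDiffOn.sqrt fun A hA => (hpos A hA.2 k).ne',
      fun A _ hA => Real.sqrt_pos.2 (hpos A hA k)⟩
  · intro A hA hAε
    rw [Finset.sum_image fun _ _ _ _ h => dir_injective h]
    simp only [hinv, Real.sq_sqrt (hpos A hAε _).le]
    exact (sum_coeff_smul_outer hA).symm
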